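/- Let Y solve dY_t/dt = -A Y_t - H U_t on [0,T] and let X solve the integral equation X_t = X_0 + ∫_0^t A^T X_τ dτ + B_t for a function B of bounded variation with B_0 = 0, where all functions are deterministic and piecewise continuous. Then Y_T^T X_T = Y_0^T X_0 - ∫_0^T U_t^T H^T X_t dt + ∫_0^T Y_t^T dB_t, where the last integral is a Riemann–Stieltjes integral, provided Y has no common discontinuities with B. -/

import Mathlib

open Matrix Finset intervalIntegral

/-- Riemann–Stieltjes integral `∫_a^b f dg = I`, as the limit of left-endpoint
Riemann–Stieltjes sums over partitions of mesh tending to zero. -/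
def IsRSIntegral (f g : ℝ → ℝ) (a b I : ℝ) : Prop :=
  ∀ ε > 0, ∃ δ > 0, ∀ (n : ℕ) (t : ℕ → ℝ),
    0 < n → t 0 = a → t n = b →
    (∀ i < n, t i < t (i + 1)) →
    (∀ i < n, t (i + 1) - t i < δ) →
    |(∑ i ∈ Finset.range n, f (t i) * (g (t (i + 1)) - g (t i))) - I| < ε

/-!
Write `x = x a + W + β` with `W t = ∫_a^t w`. Then `∫ f dβ = ∫ f dx - ∫ f dW`, and both integrals
on the right are handled by one criterion: if on every `[u, v]` the Riemann–Stieltjes summand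
`f u (β v - β u)` differs from the increment of some `Φ` by at most `(v - u) (V v - V u)`, the
errors telescope and the sums converge to `Φ b - Φ a`. Summation by parts gives
`Φ = f x - ∫ f' x` with `V` built from `∫ |w|` and the variation of `β`, and for `W` one takes
`Φ = ∫ f w`. For the matrix system, `(A Y) ⬝ X = Y ⬝ Aᵀ X` makes the drift terms cancel,
leaving `-U ⬝ Hᵀ X`.
-/

open Set
open MeasureTheory (volume)
open scoped NNReal

theorem mem_Icc_of_lt_succ {α : Type*} [Preorder α] {t : ℕ → α} {n i : ℕ}
    (ht : ∀ i < n, t i < t (i + 1)) (hi : i ≤ n) : t i ∈ Icc (t 0) (t n) :=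
  have hmono := (strictMonoOn_Iic_of_lt_succ ht).monotoneOn
  ⟨hmono (Nat.zero_le n) hi (Nat.zero_le i), hmono hi (mem_Iic.2 le_rfl) hi⟩

theorem IntervalIntegrable.mono_Icc {E : Type*} [NormedAddCommGroup E] {f : ℝ → E}
    {μ : MeasureTheory.Measure ℝ} {a b u v : ℝ} (hf : IntervalIntegrable f μ a b)
    (hu : u ∈ Icc a b) (hv : v ∈ Icc a b) : IntervalIntegrable f μ u v :=
  hf.mono_set ((uIcc_subset_Icc hu hv).trans Icc_subset_uIcc)

namespace IsRSIntegral

variable {f β β₁ β₂ : ℝ → ℝ} {a b I I₁ I₂ : ℝ}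

theorem sub (h₁ : IsRSIntegral f β₁ a b I₁) (h₂ : IsRSIntegral f β₂ a b I₂) :
    IsRSIntegral f (fun t => β₁ t - β₂ t) a b (I₁ - I₂) := by
  intro ε hε
  obtain ⟨δ₁, hδ₁, hS₁⟩ := h₁ (ε / 2) (half_pos hε)
  obtain ⟨δ₂, hδ₂, hS₂⟩ := h₂ (ε / 2) (half_pos hε)
  refine ⟨min δ₁ δ₂, lt_min hδ₁ hδ₂, fun n t hn h0 hn' hlt hmesh => ?_⟩
  have e₁ := hS₁ n t hn h0 hn' hlt fun i hi => (hmesh i hi).trans_le (min_le_left _ _)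
  have e₂ := hS₂ n t hn h0 hn' hlt fun i hi => (hmesh i hi).trans_le (min_le_right _ _)
  have hsum : ∑ i ∈ range n, f (t i) * ((β₁ (t (i + 1)) - β₂ (t (i + 1))) - (β₁ (t i) - β₂ (t i)))
      = ∑ i ∈ range n, f (t i) * (β₁ (t (i + 1)) - β₁ (t i))
        - ∑ i ∈ range n, f (t i) * (β₂ (t (i + 1)) - β₂ (t i)) := by
    rw [← sum_sub_distrib]
    exact sum_congr rfl fun i _ => by ring
  rw [hsum, sub_sub_sub_comm]
  exact (abs_sub _ _).trans_lt (by linarith)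

theorem congr_add_const (h : IsRSIntegral f β₁ a b I) {c : ℝ}
    (hβ : ∀ t ∈ Icc a b, β₂ t = β₁ t + c) : IsRSIntegral f β₂ a b I := by
  intro ε hε
  obtain ⟨δ, hδ, hS⟩ := h ε hε
  refine ⟨δ, hδ, fun n t hn h0 hn' hlt hmesh => ?_⟩
  have hmem : ∀ i ≤ n, t i ∈ Icc a b := fun i hi => h0 ▸ hn' ▸ mem_Icc_of_lt_succ hlt hi
  convert hS n t hn h0 hn' hlt hmesh using 4 with i hi
  have hi := mem_range.1 hi
  rw [hβ _ (hmem (i + 1) hi), hβ _ (hmem i hi.le)]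
  ring

end IsRSIntegral

theorem isRSIntegral_of_abs_sub_le {f β Φ V : ℝ → ℝ} {a b : ℝ}
    (h : ∀ u ∈ Icc a b, ∀ v ∈ Icc a b, u ≤ v →
      |f u * (β v - β u) - (Φ v - Φ u)| ≤ (v - u) * (V v - V u)) :
    IsRSIntegral f β a b (Φ b - Φ a) := by
  -- `h` forces `V` to increase along any partition, so the errors telescope to `δ (V b - V a)`.
  intro ε hε
  set δ := ε / (|V b - V a| + 1)
  refine ⟨δ, by positivity, fun n t _ h0 hn hlt hmesh => ?_⟩
  have hmem : ∀ i ≤ n, t i ∈ Icc a b := fun i hi => h0 ▸ hn ▸ mem_Icc_of_lt_succ hlt hi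
  have hloc : ∀ i < n, |f (t i) * (β (t (i + 1)) - β (t i)) - (Φ (t (i + 1)) - Φ (t i))|
      ≤ δ * (V (t (i + 1)) - V (t i)) := by
    intro i hi
    have hle := h _ (hmem i hi.le) _ (hmem (i + 1) hi) (hlt i hi).le
    have hV : 0 ≤ V (t (i + 1)) - V (t i) :=
      nonneg_of_mul_nonneg_right ((abs_nonneg _).trans hle) (sub_pos.2 (hlt i hi))
    exact hle.trans (mul_le_mul_of_nonneg_right (hmesh i hi).le hV)
  calc _ = |∑ i ∈ range n,
          (f (t i) * (β (t (i + 1)) - β (t i)) - (Φ (t (i + 1)) - Φ (t i)))| := by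
        rw [sum_sub_distrib, sum_range_sub (fun i => Φ (t i)), h0, hn]
    _ ≤ ∑ i ∈ range n, δ * (V (t (i + 1)) - V (t i)) :=
        (abs_sum_le_sum_abs _ _).trans (sum_le_sum fun i hi => hloc i (mem_range.1 hi))
    _ = δ * (V b - V a) := by rw [← mul_sum, sum_range_sub (fun i => V (t i)), h0, hn]
    _ ≤ δ * |V b - V a| := mul_le_mul_of_nonneg_left (le_abs_self _) (by positivity)
    _ < ε := by
        rw [div_mul_eq_mul_div, div_lt_iff₀ (by positivity)]
        nlinarith [abs_nonneg (V b - V a)]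

theorem isRSIntegral_of_hasDerivAt_of_abs_sub_le {f g β V : ℝ → ℝ} {a b : ℝ}
    (hf : ∀ t ∈ Icc a b, HasDerivAt f (g t) t) (hg : ContinuousOn g (Icc a b))
    (hβ : IntervalIntegrable β volume a b)
    (hV : ∀ s ∈ Icc a b, ∀ t ∈ Icc a b, s ≤ t → |β t - β s| ≤ V t - V s) :
    IsRSIntegral f β a b (f b * β b - f a * β a - ∫ t in a..b, g t * β t) := by
  obtain ⟨M, hM⟩ := isCompact_Icc.exists_bound_of_continuousOn hg
  have hgβ : ∀ u ∈ Icc a b, ∀ v ∈ Icc a b, IntervalIntegrable (fun t => g t * β t) volume u v :=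
    fun u hu v hv => (hβ.mono_Icc hu hv).continuousOn_mul (hg.mono (uIcc_subset_Icc hu hv))
  -- `Φ` is the primitive suggested by summation by parts
  have key := isRSIntegral_of_abs_sub_le (a := a) (b := b) (f := f) (β := β)
    (Φ := fun t => f t * β t - ∫ s in a..t, g s * β s) (V := fun t => M * V t) ?_
  · convert key using 1
    simp only [integral_same, sub_zero]
    ring
  intro u hu v hv huv
  have hsub := uIcc_subset_Icc hu hv
  have hFTC : ∫ s in u..v, g s = f v - f u :=
    integral_eq_sub_of_hasDerivAt (fun s hs => hf s (hsub hs)) (hg.mono hsub).intervalIntegrable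
  have hleft := hgβ a ⟨le_rfl, hu.1.trans hu.2⟩
  have herr : f u * (β v - β u) - ((f v * β v - ∫ s in a..v, g s * β s)
      - (f u * β u - ∫ s in a..u, g s * β s)) = ∫ s in u..v, g s * (β s - β v) := by
    have hsplit : ∫ s in u..v, g s * (β s - β v)
        = (∫ s in u..v, g s * β s) - (∫ s in u..v, g s) * β v := by
      rw [← intervalIntegral.integral_mul_const, ← integral_sub (hgβ u hu v hv)
        ((hg.mono hsub).intervalIntegrable.mul_const _)]
      simp only [mul_sub]
    rw [hsplit, hFTC, ← integral_interval_sub_left (hleft v hv) (hleft u hu)]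
    ring
  rw [herr, ← Real.norm_eq_abs]
  calc ‖∫ s in u..v, g s * (β s - β v)‖ ≤ M * (V v - V u) * |v - u| := by
        refine intervalIntegral.norm_integral_le_of_norm_le_const fun s hs => ?_
        rw [uIoc_of_le huv] at hs
        have hs' : s ∈ Icc a b := ⟨hu.1.trans hs.1.le, hs.2.trans hv.2⟩
        have hβs : |β v - β s| ≤ V v - V u := by
          linarith [hV s hs' v hv hs.2, hV u hu s hs' hs.1.le, abs_nonneg (β s - β u)]
        rw [norm_mul, Real.norm_eq_abs (β s - β v), abs_sub_comm]
        exact mul_le_mul (hM s hs') hβs (abs_nonneg _) ((norm_nonneg _).trans (hM s hs'))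
    _ = (v - u) * (M * V v - M * V u) := by rw [abs_of_nonneg (sub_nonneg.2 huv)]; ring

theorem isRSIntegral_primitive_of_lipschitzOnWith {f w : ℝ → ℝ} {a b : ℝ} {L : ℝ≥0}
    (hf : LipschitzOnWith L f (Icc a b)) (hw : IntervalIntegrable w volume a b) :
    IsRSIntegral f (fun t => ∫ s in a..t, w s) a b (∫ t in a..b, f t * w t) := by
  have key := isRSIntegral_of_abs_sub_le (a := a) (b := b) (f := f)
    (β := fun t => ∫ s in a..t, w s) (Φ := fun t => ∫ s in a..t, f s * w s)
    (V := fun t => L * ∫ s in a..t, |w s|) ?_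
  · simpa only [integral_same, sub_zero] using key
  intro u hu v hv huv
  have ha : a ∈ Icc a b := ⟨le_rfl, hu.1.trans hu.2⟩
  have hfw : ∀ s ∈ Icc a b, IntervalIntegrable (fun t => f t * w t) volume a s :=
    fun s hs =>
      (hw.mono_Icc ha hs).continuousOn_mul (hf.continuousOn.mono (uIcc_subset_Icc ha hs))
  have hsplit {h : ℝ → ℝ} (hh : ∀ s ∈ Icc a b, IntervalIntegrable h volume a s) :
      (∫ s in a..v, h s) - ∫ s in a..u, h s = ∫ s in u..v, h s :=
    integral_interval_sub_left (hh v hv) (hh u hu)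
  have hwuv : IntervalIntegrable w volume u v := hw.mono_Icc hu hv
  have hfwuv : IntervalIntegrable (fun t => f t * w t) volume u v :=
    (hfw v hv).mono_Icc ⟨hu.1, huv⟩ ⟨hv.1, le_rfl⟩
  rw [← mul_sub, hsplit fun s hs => hw.mono_Icc ha hs, hsplit hfw,
    hsplit fun s hs => (hw.mono_Icc ha hs).abs, ← integral_const_mul,
    ← integral_sub (hwuv.const_mul _) hfwuv]
  calc |∫ s in u..v, (f u * w s - f s * w s)|
      ≤ ∫ s in u..v, |f u * w s - f s * w s| := abs_integral_le_integral_abs huv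
    _ ≤ ∫ s in u..v, L * (v - u) * |w s| := by
        refine integral_mono_on huv ((hwuv.const_mul _).sub hfwuv).abs (hwuv.abs.const_mul _)
          fun s hs => ?_
        have hs' : s ∈ Icc a b := ⟨hu.1.trans hs.1, hs.2.trans hv.2⟩
        have hfs : |f u - f s| ≤ L * (v - u) := by
          have := hf.dist_le_mul u hu s hs'
          rw [Real.dist_eq, Real.dist_eq, abs_sub_comm u,
            abs_of_nonneg (sub_nonneg.2 hs.1)] at this
          exact this.trans (mul_le_mul_of_nonneg_left (by linarith [hs.2]) L.coe_nonneg)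
        rw [← sub_mul, abs_mul]
        exact mul_le_mul_of_nonneg_right hfs (abs_nonneg _)
    _ = (v - u) * (L * ∫ s in u..v, |w s|) := by rw [integral_const_mul]; ring

theorem isRSIntegral_integration_by_parts {f g x w β : ℝ → ℝ} {a b : ℝ} (hab : a ≤ b)
    (hf : ∀ t ∈ Icc a b, HasDerivAt f (g t) t) (hg : ContinuousOn g (Icc a b))
    (hx : IntervalIntegrable x volume a b) (hw : IntervalIntegrable w volume a b)
    (hβ : BoundedVariationOn β (Icc a b))
    (hxβ : ∀ t ∈ Icc a b, x t = x a + (∫ s in a..t, w s) + β t) :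
    IsRSIntegral f β a b (f b * x b - f a * x a - ∫ t in a..b, (g t * x t + f t * w t)) := by
  have ha : a ∈ Icc a b := left_mem_Icc.2 hab
  have hxV : ∀ s ∈ Icc a b, ∀ t ∈ Icc a b, s ≤ t → |x t - x s| ≤
      ((∫ r in a..t, |w r|) + variationOnFromTo β (Icc a b) a t)
        - ((∫ r in a..s, |w r|) + variationOnFromTo β (Icc a b) a s) := by
    intro s hs t ht hst
    have hxts : x t - x s = (∫ r in s..t, w r) + (β t - β s) := by
      rw [hxβ t ht, hxβ s hs,
        ← integral_interval_sub_left (hw.mono_Icc ha ht) (hw.mono_Icc ha hs)]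
      ring
    rw [hxts]
    calc _ ≤ |∫ r in s..t, w r| + |β t - β s| := abs_add_le _ _
      _ ≤ (∫ r in s..t, |w r|) + (variationOnFromTo β (Icc a b) a t
            - variationOnFromTo β (Icc a b) a s) :=
          add_le_add (abs_integral_le_integral_abs hst)
            (variationOnFromTo.abs_sub_le_sub_of_le hβ.locallyBoundedVariationOn ha hs ht hst)
      _ = _ := by
          rw [← integral_interval_sub_left (hw.mono_Icc ha ht).abs (hw.mono_Icc ha hs).abs]
          ring
  obtain ⟨M, hM⟩ := isCompact_Icc.exists_bound_of_continuousOn hg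
  have hLip : LipschitzOnWith M.toNNReal f (Icc a b) :=
    (convex_Icc a b).lipschitzOnWith_of_nnnorm_hasDerivWithin_le
      (fun t ht => (hf t ht).hasDerivWithinAt) fun t ht => by
        rw [← NNReal.coe_le_coe, coe_nnnorm, Real.coe_toNNReal']
        exact (hM t ht).trans (le_max_left _ _)
  have h := ((isRSIntegral_of_hasDerivAt_of_abs_sub_le hf hg hx hxV).sub
    (isRSIntegral_primitive_of_lipschitzOnWith hLip hw)).congr_add_const (β₂ := β) (c := -x a)
    fun t ht => by rw [hxβ t ht]; ring
  rw [← uIcc_of_le hab] at hg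
  rw [integral_add (hx.continuousOn_mul hg)
    (hw.continuousOn_mul (uIcc_of_le hab ▸ hLip.continuousOn))]
  convert h using 1
  ring

theorem IntervalIntegrable.eval {ι : Type*} [Fintype ι] {E : ι → Type*}
    [∀ i, NormedAddCommGroup (E i)] {F : ℝ → ∀ i, E i} {μ : MeasureTheory.Measure ℝ} {a b : ℝ}
    (hF : IntervalIntegrable F μ a b) (k : ι) : IntervalIntegrable (fun t => F t k) μ a b :=
  ⟨hF.1.eval k, hF.2.eval k⟩

theorem intervalIntegral.eval_integral {ι : Type*} [Fintype ι] {F : ℝ → ι → ℝ}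
    {μ : MeasureTheory.Measure ℝ} {a b : ℝ} (hF : IntervalIntegrable F μ a b) (k : ι) :
    (∫ t in a..b, F t ∂μ) k = ∫ t in a..b, F t k ∂μ :=
  ((ContinuousLinearMap.proj (R := ℝ) (φ := fun _ : ι => ℝ) k).intervalIntegral_comp_comm
    hF).symm

theorem IntervalIntegrable.mulVec {ι κ : Type*} [Fintype ι] [Fintype κ] (A : Matrix ι κ ℝ)
    {F : ℝ → κ → ℝ} {μ : MeasureTheory.Measure ℝ} {a b : ℝ} (hF : IntervalIntegrable F μ a b) :
    IntervalIntegrable (fun t => A *ᵥ F t) μ a b :=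
  let L := LinearMap.toContinuousLinearMap A.mulVecLin
  ⟨L.integrable_comp hF.1, L.integrable_comp hF.2⟩

theorem BoundedVariationOn.eval {ι : Type*} [Fintype ι] {F : ℝ → ι → ℝ} {s : Set ℝ}
    (hF : BoundedVariationOn F s) (k : ι) : BoundedVariationOn (fun t => F t k) s :=
  (LipschitzWith.eval k).comp_boundedVariationOn hF

theorem neg_mulVec_sub_mulVec_dotProduct_add {ι κ : Type*} [Fintype ι] [Fintype κ]
    (A : Matrix ι ι ℝ) (H : Matrix ι κ ℝ) (y x : ι → ℝ) (u : κ → ℝ) :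
    (-(A *ᵥ y) - H *ᵥ u) ⬝ᵥ x + y ⬝ᵥ Aᵀ *ᵥ x = -(u ⬝ᵥ Hᵀ *ᵥ x) := by
  simp only [dotProduct_mulVec, vecMul_transpose, neg_dotProduct, sub_dotProduct]
  ring

theorem stmt15_general {d m : ℕ} (A : Matrix (Fin d) (Fin d) ℝ)
    (H : Matrix (Fin d) (Fin m) ℝ) (T : ℝ) (hT : 0 < T)
    (U : ℝ → Fin m → ℝ) (hU : ContinuousOn U (Set.Icc 0 T))
    (Y : ℝ → Fin d → ℝ)
    (hY : ∀ t ∈ Set.Icc (0 : ℝ) T,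
      HasDerivAt Y (-(A.mulVec (Y t)) - H.mulVec (U t)) t)
    (B : ℝ → Fin d → ℝ)
    (hBV : BoundedVariationOn B (Set.Icc 0 T))
    (X : ℝ → Fin d → ℝ)
    (hXint : IntervalIntegrable X MeasureTheory.volume 0 T)
    (hXeq : ∀ t ∈ Set.Icc (0 : ℝ) T,
      X t = X 0 + (∫ τ in (0 : ℝ)..t, Aᵀ.mulVec (X τ)) + B t) :
    ∃ I : Fin d → ℝ,
      (∀ k, IsRSIntegral (fun t => Y t k) (fun t => B t k) 0 T (I k)) ∧
      Y T ⬝ᵥ X T =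
        Y 0 ⬝ᵥ X 0 - (∫ t in (0 : ℝ)..T, U t ⬝ᵥ Hᵀ.mulVec (X t)) +
          ∑ k, I k := by
  have h0 : (0 : ℝ) ∈ Icc 0 T := left_mem_Icc.2 hT.le
  have hYc : ContinuousOn Y (Icc 0 T) := fun t ht => (hY t ht).continuousAt.continuousWithinAt
  set G : ℝ → Fin d → ℝ := fun t => -(A *ᵥ Y t) - H *ᵥ U t
  have hGc : ContinuousOn G (Icc 0 T) := by fun_prop
  have hw := hXint.mulVec Aᵀ
  have hRS : ∀ k, IsRSIntegral (fun t => Y t k) (fun t => B t k) 0 T (Y T k * X T k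
      - Y 0 k * X 0 k - ∫ t in (0 : ℝ)..T, (G t k * X t k + Y t k * (Aᵀ *ᵥ X t) k)) :=
    fun k => isRSIntegral_integration_by_parts hT.le (fun t ht => hasDerivAt_pi.1 (hY t ht) k)
      ((continuous_apply k).comp_continuousOn hGc) (hXint.eval k) (hw.eval k) (hBV.eval k)
      fun t ht => by
        have hXk := congrFun (hXeq t ht) k
        rwa [Pi.add_apply, Pi.add_apply, intervalIntegral.eval_integral (hw.mono_Icc h0 ht)] at hXk
  refine ⟨_, hRS, ?_⟩
  rw [← uIcc_of_le hT.le] at hYc hGc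
  have hint : ∀ k, IntervalIntegrable (fun t => G t k * X t k + Y t k * (Aᵀ *ᵥ X t) k) volume 0 T :=
    fun k => ((hXint.eval k).continuousOn_mul ((continuous_apply k).comp_continuousOn hGc)).add
      ((hw.eval k).continuousOn_mul ((continuous_apply k).comp_continuousOn hYc))
  rw [sum_sub_distrib, sum_sub_distrib, ← integral_finsetSum fun k _ => hint k,
    integral_congr fun t _ => sum_add_distrib.trans
      (neg_mulVec_sub_mulVec_dotProduct_add A H (Y t) (X t) (U t)), integral_neg]
  change Y T ⬝ᵥ X T = Y 0 ⬝ᵥ X 0 - _ + (Y T ⬝ᵥ X T - Y 0 ⬝ᵥ X 0 - -_)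
  ring

/-- pathwise integration by parts. If `Y` is `C¹` solving
`dY/dt = -A Y - H U`, and `X_t = X_0 + ∫_0^t Aᵀ X_τ dτ + B_t` with `B` of
bounded variation, `B_0 = 0`, then
`Y_Tᵀ X_T = Y_0ᵀ X_0 - ∫_0^T U_tᵀ Hᵀ X_t dt + ∫_0^T Y_tᵀ dB_t`, the last
integral being a Riemann–Stieltjes integral (which exists since the continuous
`Y` has no common discontinuities with `B`). -/
theorem stmt15 {d m : ℕ} (A : Matrix (Fin d) (Fin d) ℝ)
    (H : Matrix (Fin d) (Fin m) ℝ) (T : ℝ) (hT : 0 < T)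
    (U : ℝ → Fin m → ℝ) (hU : ContinuousOn U (Set.Icc 0 T))
    (Y : ℝ → Fin d → ℝ)
    (hY : ∀ t ∈ Set.Icc (0 : ℝ) T,
      HasDerivAt Y (-(A.mulVec (Y t)) - H.mulVec (U t)) t)
    (hYcont : ContinuousOn Y (Set.Icc 0 T))
    (B : ℝ → Fin d → ℝ) (hB0 : B 0 = 0)
    (hBV : BoundedVariationOn B (Set.Icc 0 T))
    (X : ℝ → Fin d → ℝ)
    (hXint : IntervalIntegrable X MeasureTheory.volume 0 T)
    (hXeq : ∀ t ∈ Set.Icc (0 : ℝ) T,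
      X t = X 0 + (∫ τ in (0 : ℝ)..t, Aᵀ.mulVec (X τ)) + B t) :
    ∃ I : Fin d → ℝ,
      (∀ k, IsRSIntegral (fun t => Y t k) (fun t => B t k) 0 T (I k)) ∧
      Y T ⬝ᵥ X T =
        Y 0 ⬝ᵥ X 0 - (∫ t in (0 : ℝ)..T, U t ⬝ᵥ Hᵀ.mulVec (X t)) +
          ∑ k, I k :=
  stmt15_general A H T hT U hU Y hY B hBV X hXint hXeq
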